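/- Let n, k, m, r be integers with n ≥ 1, 2 ≤ k, and 1 ≤ r ≤ ⌊k/2⌋, and suppose m + k − j ≠ 0 for every j with 0 ≤ j ≤ r − 1. Define rational numbers c_{m,0} = 1 and c_{m,s} = 1/((k+m)(k+m−1)⋯(k+m−s+1)·s!) for s ≥ 1. Then Σ_{s=0}^{r} c_{m,s} · (r!/(r−s)!) · (n−k+r+1)(n−k+r+2)⋯(n−k+r+s) = ((m+n+r+1)(m+n+r)⋯(m+n+2)) / ((m+k)(m+k−1)⋯(m+k−r+1)), as an identity of rational numbers. -/

import Mathlib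

/-!
Write `x = n - k + r + 1`, `y = m + k`, and let `a⁽ˢ⁾`, `(a)ₛ` be rising and falling factorials.
Then `c_s · r!/(r-s)! = C(r,s) / (y)ₛ`, and since `(y)ᵣ = (y)ₛ · (y - r + 1)⁽ʳ⁻ˢ⁾`, multiplying
the sum by `(y)ᵣ` gives `∑ C(r,s) x⁽ˢ⁾ (y - r + 1)⁽ʳ⁻ˢ⁾`. By Chu–Vandermonde for rising factorials
this is `(x + y - r + 1)⁽ʳ⁾ = (m + n + 2)⁽ʳ⁾`. The rising Vandermonde identity follows from the
falling one via `a⁽ᵏ⁾ = (-1)ᵏ (-a)ₖ`.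
-/

open Polynomial Finset

namespace Polynomial

lemma ascPochhammer_eval_eq_prod_range {R : Type*} [CommSemiring R] (n : ℕ) (a : R) :
    (ascPochhammer R n).eval a = ∏ j ∈ range n, (a + j) := by
  induction n with
  | zero => simp
  | succ n ih => simp [ascPochhammer_succ_right, ih, ← Finset.prod_range_succ]

lemma descPochhammer_smeval_eq_eval {R : Type*} [Ring R] (n : ℕ) (a : R) :
    (descPochhammer ℤ n).smeval a = (descPochhammer R n).eval a := by
  rw [← aeval_eq_smeval, aeval_def, ← eval_map, descPochhammer_map]

section CommRing

variable {R : Type*} [CommRing R]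

theorem ascPochhammer_eval_add (n : ℕ) (a b : R) :
    (ascPochhammer R n).eval (a + b) = ∑ ij ∈ antidiagonal n,
      n.choose ij.1 * ((ascPochhammer R ij.1).eval a * (ascPochhammer R ij.2).eval b) := by
  have asc_eq (k : ℕ) (x : R) : (ascPochhammer R k).eval x =
      (-1) ^ k * (descPochhammer ℤ k).smeval (-x) := by
    rw [descPochhammer_smeval_eq_eval, ← ascPochhammer_eval_neg_eq_descPochhammer, neg_neg]
  rw [asc_eq, neg_add, Ring.descPochhammer_smeval_add n (Commute.all _ _), mul_sum]
  refine sum_congr rfl fun ij hij => ?_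
  rw [asc_eq, asc_eq, ← mem_antidiagonal.mp hij, pow_add]
  ring

theorem descPochhammer_eval_eq_mul_ascPochhammer_eval {s r : ℕ} (h : s ≤ r) (a : R) :
    (descPochhammer R r).eval a =
      (descPochhammer R s).eval a * (ascPochhammer R (r - s)).eval (a - r + 1) := by
  obtain ⟨t, rfl⟩ := Nat.exists_eq_add_of_le h
  rw [← descPochhammer_mul, eval_mul, eval_comp, Nat.add_sub_cancel_left, eval_sub, eval_X,
    eval_natCast, descPochhammer_eval_eq_ascPochhammer (r := a - s), Nat.cast_add, sub_sub]

end CommRing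

theorem sum_choose_mul_ascPochhammer_div_descPochhammer {K : Type*} [Field K] (r : ℕ) (x y : K)
    (hy : (descPochhammer K r).eval y ≠ 0) :
    ∑ s ∈ range (r + 1), r.choose s * (ascPochhammer K s).eval x / (descPochhammer K s).eval y =
      (ascPochhammer K r).eval (x + y - r + 1) / (descPochhammer K r).eval y := by
  rw [eq_div_iff hy, sum_mul, show x + y - r + 1 = x + (y - r + 1) by ring, ascPochhammer_eval_add,
    Nat.sum_antidiagonal_eq_sum_range_succ_mk]
  refine sum_congr rfl fun s hs => ?_
  have hsr : s ≤ r := mem_range_succ_iff.mp hs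
  rw [descPochhammer_eval_eq_mul_ascPochhammer_eval hsr] at hy ⊢
  field_simp [left_ne_zero_of_mul hy]

end Polynomial

theorem sum_c_eq_ratio_general (n k m : ℤ) (r : ℕ)
    (hm : ∀ j : ℕ, j < r → m + k - (j : ℤ) ≠ 0)
    (c : ℕ → ℚ) (hc0 : c 0 = 1)
    (hc : ∀ s : ℕ, 1 ≤ s →
      c s = 1 / ((∏ t ∈ Finset.range s, ((k : ℚ) + (m : ℚ) - (t : ℚ))) * (s.factorial : ℚ))) :
    ∑ s ∈ Finset.range (r + 1),
        c s * ((r.factorial : ℚ) / ((r - s).factorial : ℚ)) *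
          ∏ j ∈ Finset.range s, ((n : ℚ) - (k : ℚ) + (r : ℚ) + 1 + (j : ℚ)) =
      (∏ j ∈ Finset.range r, ((m : ℚ) + (n : ℚ) + 2 + (j : ℚ))) /
        ∏ t ∈ Finset.range r, ((m : ℚ) + (k : ℚ) - (t : ℚ)) := by
  set x : ℚ := n - k + r + 1
  set y : ℚ := m + k with hy_def
  have hc_eq (s : ℕ) : c s = ((descPochhammer ℚ s).eval y * s.factorial)⁻¹ := by
    rcases Nat.eq_zero_or_pos s with rfl | hs
    · simp [hc0]
    · simp_rw [hc s hs, one_div, descPochhammer_eval_eq_prod_range, y, add_comm (k : ℚ)]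
  have hy : (descPochhammer ℚ r).eval y ≠ 0 := by
    rw [descPochhammer_eval_eq_prod_range, prod_ne_zero_iff]
    intro j hj
    rw [hy_def]
    exact_mod_cast hm j (mem_range.mp hj)
  convert sum_choose_mul_ascPochhammer_div_descPochhammer r x y hy using 1
  · refine sum_congr rfl fun s hs => ?_
    rw [hc_eq, ascPochhammer_eval_eq_prod_range,
      Nat.cast_choose ℚ (mem_range_succ_iff.mp hs)]
    field_simp
  · rw [ascPochhammer_eval_eq_prod_range, descPochhammer_eval_eq_prod_range]
    congr 1
    refine prod_congr rfl fun j _ => ?_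
    ring

theorem sum_c_eq_ratio (n k m : ℤ) (r : ℕ)
    (hn : 1 ≤ n) (hk : 2 ≤ k) (hr : 1 ≤ r) (hrk : (r : ℤ) ≤ k / 2)
    (hm : ∀ j : ℕ, j < r → m + k - (j : ℤ) ≠ 0)
    (c : ℕ → ℚ) (hc0 : c 0 = 1)
    (hc : ∀ s : ℕ, 1 ≤ s →
      c s = 1 / ((∏ t ∈ Finset.range s, ((k : ℚ) + (m : ℚ) - (t : ℚ))) * (s.factorial : ℚ))) :
    ∑ s ∈ Finset.range (r + 1),
        c s * ((r.factorial : ℚ) / ((r - s).factorial : ℚ)) *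
          ∏ j ∈ Finset.range s, ((n : ℚ) - (k : ℚ) + (r : ℚ) + 1 + (j : ℚ)) =
      (∏ j ∈ Finset.range r, ((m : ℚ) + (n : ℚ) + 2 + (j : ℚ))) /
        ∏ t ∈ Finset.range r, ((m : ℚ) + (k : ℚ) - (t : ℚ)) :=
  sum_c_eq_ratio_general n k m r hm c hc0 hc
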